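/- Let v ∈ ℂ^{MN} be the discrete chirp v[n] = (1/√(MN)) e^{2πi (α n² + β n + γ)/(MN)}. Then for any k, l ∈ ℤ_{MN}, the self-ambiguity satisfies |A_v[k,l]| = 1 if 2αk ≡ l (mod MN) and A_v[k,l] = 0 otherwise. -/

import Mathlib

open Complex BigOperators Finset

/-- The character `a ↦ e^{2πi a / Q}` on `ZMod Q` (well defined since it only
depends on the residue of the exponent modulo `Q`). -/
noncomputable def ch (Q : ℕ) (a : ZMod Q) : ℂ :=
  Complex.exp (2 * Real.pi * Complex.I * a.val / Q)

/-- The Heisenberg operator `D_{(k,l)}` acting on `Q`-periodic sequences: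
`(D_{(k,l)} x)[n] = x[n-k] e^{2πi l (n-k)/Q}`. -/
noncomputable def HeisD (Q : ℕ) (k l : ZMod Q) (x : ZMod Q → ℂ) : ZMod Q → ℂ :=
  fun n => x (n - k) * ch Q (l * (n - k))

/-- The (cross-)ambiguity function
`A_{x,y}[k,l] = Σ_n x[n] conj(y[n-k]) e^{-2πi l (n-k)/Q}`. -/
noncomputable def Amb (Q : ℕ) [NeZero Q] (x y : ZMod Q → ℂ) (k l : ZMod Q) : ℂ :=
  ∑ n : ZMod Q, x n * (starRingEnd ℂ) (y (n - k)) * (starRingEnd ℂ) (ch Q (l * (n - k)))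

/-- The discrete chirp `v[n] = (1/√Q) e^{2πi (α n² + β n + γ)/Q}`. -/
noncomputable def chirp (Q : ℕ) (α β γ : ZMod Q) : ZMod Q → ℂ :=
  fun n => (1 / Real.sqrt Q) * ch Q (α * n ^ 2 + β * n + γ)

lemma ch_natCast (Q : ℕ) [NeZero Q] (m : ℕ) :
    ch Q (m : ZMod Q) = Complex.exp (2 * Real.pi * Complex.I * m / Q) := by
  have hQ : (Q : ℂ) ≠ 0 := by exact_mod_cast (NeZero.ne Q)
  have hval : ((m : ZMod Q)).val = m % Q := ZMod.val_natCast Q m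
  have hm : (m : ℂ) = ((m % Q : ℕ) : ℂ) + ((m / Q : ℕ) : ℂ) * Q := by
    exact_mod_cast (Nat.mod_add_div' m Q).symm
  rw [ch, hval, hm]
  rw [show 2 * ↑Real.pi * I * (((m % Q : ℕ) : ℂ) + ((m / Q : ℕ) : ℂ) * ↑Q) / ↑Q
      = 2 * ↑Real.pi * I * ((m % Q : ℕ) : ℂ) / ↑Q + ((m / Q : ℕ) : ℂ) * (2 * ↑Real.pi * I) by
    field_simp]
  rw [Complex.exp_add, Complex.exp_nat_mul_two_pi_mul_I, mul_one]

lemma ch_add (Q : ℕ) [NeZero Q] (a b : ZMod Q) : ch Q (a + b) = ch Q a * ch Q b := by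
  have hQ : (Q : ℂ) ≠ 0 := by exact_mod_cast (NeZero.ne Q)
  have ha : ((a.val : ℕ) : ZMod Q) = a := ZMod.natCast_rightInverse a
  have hb : ((b.val : ℕ) : ZMod Q) = b := ZMod.natCast_rightInverse b
  have h : a + b = ((a.val + b.val : ℕ) : ZMod Q) := by push_cast [ha, hb]; ring
  rw [h, ch_natCast]
  nth_rewrite 2 [← ha]; nth_rewrite 2 [← hb]
  rw [ch_natCast, ch_natCast, ← Complex.exp_add]
  congr 1
  push_cast
  field_simp

lemma abs_ch (Q : ℕ) (a : ZMod Q) : ‖ch Q a‖ = 1 := by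
  rw [ch, show 2 * (Real.pi : ℂ) * I * a.val / Q
      = (((2 * Real.pi * a.val / Q : ℝ)) : ℂ) * I by push_cast; ring,
    Complex.norm_exp_ofReal_mul_I]

lemma ch_zero (Q : ℕ) : ch Q 0 = 1 := by
  simp [ch, ZMod.val_zero]

lemma conj_ch (Q : ℕ) [NeZero Q] (a : ZMod Q) :
    (starRingEnd ℂ) (ch Q a) = ch Q (-a) := by
  have h1 : ch Q a * ch Q (-a) = 1 := by
    rw [← ch_add]; simp [ch_zero]
  have h2 : (starRingEnd ℂ) (ch Q a) * ch Q a = 1 := by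
    rw [mul_comm, Complex.mul_conj]
    norm_cast
    rw [← Complex.sq_norm, abs_ch, one_pow]
  calc (starRingEnd ℂ) (ch Q a) = (ch Q a)⁻¹ := eq_inv_of_mul_eq_one_left h2
    _ = ch Q (-a) := (eq_inv_of_mul_eq_one_left (by rw [mul_comm]; exact h1)).symm

lemma ch_mul_val (Q : ℕ) [NeZero Q] (d n : ZMod Q) : ch Q (d * n) = ch Q d ^ n.val := by
  have hd : ((d.val : ℕ) : ZMod Q) = d := ZMod.natCast_rightInverse d
  have hn : ((n.val : ℕ) : ZMod Q) = n := ZMod.natCast_rightInverse n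
  have h : d * n = ((d.val * n.val : ℕ) : ZMod Q) := by push_cast [hd, hn]; ring
  rw [h, ch_natCast, ch, ← Complex.exp_nat_mul]
  congr 1
  push_cast
  ring

lemma ch_pow_card (Q : ℕ) [NeZero Q] (d : ZMod Q) : ch Q d ^ Q = 1 := by
  have hQ : (Q : ℂ) ≠ 0 := by exact_mod_cast (NeZero.ne Q)
  rw [ch, ← Complex.exp_nat_mul,
    show (Q : ℂ) * (2 * ↑Real.pi * I * ↑d.val / ↑Q) = (d.val : ℂ) * (2 * ↑Real.pi * I) by
      field_simp,
    Complex.exp_nat_mul_two_pi_mul_I]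

lemma ch_ne_one (Q : ℕ) [NeZero Q] {d : ZMod Q} (hd : d ≠ 0) : ch Q d ≠ 1 := by
  intro h
  rw [ch, Complex.exp_eq_one_iff] at h
  obtain ⟨m, hm⟩ := h
  have hQ : (0:ℝ) < Q := by
    have := Nat.pos_of_ne_zero (NeZero.ne Q); exact_mod_cast this
  have hpi : (2 * Real.pi : ℝ) ≠ 0 := by positivity
  have hQc : (Q : ℂ) ≠ 0 := by exact_mod_cast (NeZero.ne Q)
  have hval : (d.val : ℝ) = m * Q := by
    have h1 : (2 * (Real.pi:ℂ) * I) * ((d.val : ℂ) / Q) = (2 * (Real.pi:ℂ) * I) * m := by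
      rw [mul_comm ((m:ℂ)) _] at hm
      linear_combination hm
    have hne : (2 * (Real.pi:ℂ) * I) ≠ 0 := by
      simp [Complex.ext_iff, Real.pi_ne_zero]
    have h2 : ((d.val : ℂ) / Q) = (m : ℂ) := mul_left_cancel₀ hne h1
    have h3 : (d.val : ℂ) = (m : ℂ) * Q := by
      rw [div_eq_iff hQc] at h2; exact h2
    exact_mod_cast h3
  have hlt : d.val < Q := ZMod.val_lt d
  have hpos : 0 < d.val := Nat.pos_of_ne_zero (fun h0 => hd (by
    rwa [ZMod.val_eq_zero] at h0))
  rcases le_or_gt m 0 with hm0 | hm0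
  · have : (m : ℝ) * Q ≤ 0 := mul_nonpos_of_nonpos_of_nonneg (by exact_mod_cast hm0) hQ.le
    have : (0:ℝ) < d.val := by exact_mod_cast hpos
    linarith [hval ▸ this]
  · have hm1 : (1:ℝ) ≤ m := by exact_mod_cast hm0
    have : (Q:ℝ) ≤ m * Q := le_mul_of_one_le_left hQ.le hm1
    have hd2 : (d.val : ℝ) < Q := by exact_mod_cast hlt
    linarith [hval]

lemma sum_ch (Q : ℕ) [NeZero Q] (d : ZMod Q) :
    ∑ n : ZMod Q, ch Q (d * n) = if d = 0 then (Q : ℂ) else 0 := by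
  have hsum : ∑ n : ZMod Q, ch Q (d * n) = ∑ i ∈ Finset.range Q, ch Q d ^ i := by
    simp_rw [ch_mul_val]
    refine Finset.sum_nbij' (i := fun n => n.val) (j := fun i => (i : ZMod Q)) ?_ ?_ ?_ ?_ ?_
    · intro a _; exact Finset.mem_range.mpr (ZMod.val_lt a)
    · intro a _; exact Finset.mem_univ _
    · intro a _; exact ZMod.natCast_rightInverse a
    · intro a ha; exact ZMod.val_natCast_of_lt (Finset.mem_range.mp ha)
    · intro a _; rfl
  rw [hsum]
  split_ifs with h
  · subst h
    simp [ch_zero]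
  · rw [geom_sum_eq (ch_ne_one Q h), ch_pow_card, sub_self, zero_div]

/-- For `Q` odd, the self-ambiguity function of the discrete chirp is unimodular on the
line `2αk ≡ l (mod Q)` and vanishes elsewhere. -/
theorem chirp_ambiguity (Q : ℕ) [NeZero Q] (hQ : Odd Q) (α β γ : ZMod Q)
    (k l : ZMod Q) :
    (2 * α * k = l → ‖Amb Q (chirp Q α β γ) (chirp Q α β γ) k l‖ = 1)
    ∧ (2 * α * k ≠ l → Amb Q (chirp Q α β γ) (chirp Q α β γ) k l = 0) := by
  have hQ0 : (0:ℝ) < Q := by exact_mod_cast Nat.pos_of_ne_zero (NeZero.ne Q)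
  have hQc : (Q : ℂ) ≠ 0 := by exact_mod_cast (NeZero.ne Q)
  set c : ZMod Q := β * k + l * k - α * k ^ 2 with hc
  set d : ZMod Q := 2 * α * k - l with hd
  have key : Amb Q (chirp Q α β γ) (chirp Q α β γ) k l
      = (1 / (Q:ℂ)) * ch Q c * (if d = 0 then (Q:ℂ) else 0) := by
    rw [Amb, ← sum_ch Q d, Finset.mul_sum]
    apply Finset.sum_congr rfl
    intro n _
    simp only [chirp]
    simp only [map_mul, map_div₀, map_one, conj_ch, Complex.conj_ofReal]
    have hsqrt : (1 / ((Real.sqrt Q : ℝ) : ℂ)) * (1 / ((Real.sqrt Q : ℝ) : ℂ)) = 1 / (Q:ℂ) := by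
      rw [div_mul_div_comm, mul_one, ← Complex.ofReal_mul, Real.mul_self_sqrt hQ0.le, Complex.ofReal_natCast]
    have hchs : ch Q (α * n ^ 2 + β * n + γ)
        * ch Q (-(α * (n - k) ^ 2 + β * (n - k) + γ))
        * ch Q (-(l * (n - k))) = ch Q c * ch Q (d * n) := by
      rw [← ch_add, ← ch_add, ← ch_add]
      congr 1
      ring
    calc (1 / ((Real.sqrt Q : ℝ) : ℂ)) * ch Q (α * n ^ 2 + β * n + γ)
          * ((1 / ((Real.sqrt Q : ℝ) : ℂ)) * ch Q (-(α * (n - k) ^ 2 + β * (n - k) + γ)))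
          * ch Q (-(l * (n - k)))
        = ((1 / ((Real.sqrt Q : ℝ) : ℂ)) * (1 / ((Real.sqrt Q : ℝ) : ℂ)))
          * (ch Q (α * n ^ 2 + β * n + γ)
             * ch Q (-(α * (n - k) ^ 2 + β * (n - k) + γ))
             * ch Q (-(l * (n - k)))) := by ring
      _ = 1 / (Q:ℂ) * (ch Q c * ch Q (d * n)) := by rw [hsqrt, hchs]
      _ = 1 / (Q:ℂ) * ch Q c * ch Q (d * n) := by ring
  constructor
  · intro h
    have hd0 : d = 0 := by rw [hd, h, sub_self]
    rw [key, if_pos hd0]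
    rw [show (1 / (Q:ℂ)) * ch Q c * (Q:ℂ) = ch Q c by field_simp]
    exact abs_ch Q c
  · intro h
    have hd0 : d ≠ 0 := by rw [hd]; exact sub_ne_zero.mpr h
    rw [key, if_neg hd0, mul_zero]
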